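/- (Theorem 4.3 item 1, polynomial algebra.) With G_k acting on ℂ[x_1, …, x_k] (the coordinate ring of g_k in the basis e_1, …, e_k) by (A·P)(x) = P(Ad(A⁻¹)(x)), the invariant subalgebra ℂ[g_k]^{G_k} is a polynomial algebra: there exist finitely many invariant polynomials f_1, …, f_r that are algebraically independent over ℂ and generate ℂ[g_k]^{G_k} as a ℂ-algebra. -/

import Mathlib

/-- The matrix `M(a)` with `M(a)_{ij} = Σ_{s_1+⋯+s_i = j, s_l ≥ 1} a_{s_1} ⋯ a_{s_i}`. -/
noncomputable def Mmat (k : ℕ) (a : Fin k → ℂ) : Matrix (Fin k) (Fin k) ℂ :=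
  fun i j =>
    ∑ s ∈ (Finset.Nat.antidiagonalTuple (i.val + 1) (j.val + 1)).filter
        (fun s => ∀ l, 0 < s l),
      ∏ l, (if h : 1 ≤ s l ∧ s l ≤ k then a ⟨s l - 1, by omega⟩ else 0)

/-- `G_k = { M(a) : a_1 ≠ 0 }`. -/
noncomputable def Gset (k : ℕ) [NeZero k] : Set (Matrix (Fin k) (Fin k) ℂ) :=
  {A | ∃ a : Fin k → ℂ, a 0 ≠ 0 ∧ A = Mmat k a}

/-- The matrix `e_s` with `(e_s)_{i,j} = i` if `j = i + s - 1` and `0` otherwise;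
`e_1, …, e_k` is a basis of `g_k`. -/
def Emat (k s : ℕ) : Matrix (Fin k) (Fin k) ℂ :=
  fun i j => if (j : ℕ) + 1 = (i : ℕ) + s then ((i : ℕ) + 1 : ℂ) else 0

/-- The element of `g_k` with coordinates `c` in the basis `e_1, …, e_k`. -/
noncomputable def matOf (k : ℕ) (c : Fin k → ℂ) : Matrix (Fin k) (Fin k) ℂ :=
  ∑ s : Fin k, c s • Emat k (s.val + 1)

/-- The coordinates of `x ∈ g_k` in the basis `e_1, …, e_k` (read off the first row,
since `(e_s)_{1,j} = δ_{j,s}`). -/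
def coordOf (k : ℕ) [NeZero k] (x : Matrix (Fin k) (Fin k) ℂ) : Fin k → ℂ :=
  fun s => x 0 s

/-!
The invariant algebra is `ℂ[x_1]`. Every `M(a)` is upper triangular, so conjugation by it fixes the
`(1,1)` entry of `x ∈ g_k`, which is the coordinate `x_1`. Conversely, `M(t, 0, …, 0)` is
`diag(t, t², …, t^k)`, and conjugation by it multiplies the coordinate `x_s` by `t^(s-1)`. For an
invariant `P` and fixed `c`, the polynomial `t ↦ P(c_1, t c_2, …, t^(k-1) c_k)` is then constant on
`ℂˣ`, hence constant, and its value at `t = 0` shows that `P` only involves `x_1`.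
-/

namespace MvPolynomial

variable {K σ : Type*} [Field K] [Infinite K]

theorem mem_supported_of_eval_indicator {s : Set σ} {P : MvPolynomial σ K}
    (h : ∀ c : σ → K, eval (s.indicator c) P = eval c P) : P ∈ supported K s := by
  classical
  rw [supported_eq_range_rename]
  refine ⟨aeval (fun i => if hi : i ∈ s then X ⟨i, hi⟩ else 0) P, funext fun c => ?_⟩
  rw [← h]
  change aeval c (rename Subtype.val (aeval _ P)) = aeval (s.indicator c) P
  rw [aeval_rename, comp_aeval_apply]
  congr 1 with i
  by_cases hi : i ∈ s <;> simp [hi]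

theorem eval_zero_pow_mul_of_forall_ne_zero (w : σ → ℕ) {P : MvPolynomial σ K}
    (h : ∀ t : K, t ≠ 0 → ∀ c : σ → K, eval (fun i => t ^ w i * c i) P = eval c P)
    (c : σ → K) : eval (fun i => 0 ^ w i * c i) P = eval c P := by
  set F : Polynomial K := aeval (fun i => Polynomial.C (c i) * Polynomial.X ^ w i) P
  have hF : ∀ t, F.eval t = eval (fun i => t ^ w i * c i) P := fun t => by
    rw [← Polynomial.coe_aeval_eq_eval, comp_aeval_apply, ← aeval_eq_eval]
    congr 1 with i
    simpa using mul_comm (c i) (t ^ w i)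
  have hFC : F = Polynomial.C (eval c P) :=
    Polynomial.eq_of_infinite_eval_eq _ _ <| (Set.finite_singleton 0).infinite_compl.mono
      fun t ht => by simp [hF, h t ht]
  rw [← hF, hFC, Polynomial.eval_C]

theorem mem_supported_of_forall_eval_pow_mul (w : σ → ℕ) {P : MvPolynomial σ K}
    (h : ∀ t : K, t ≠ 0 → ∀ c : σ → K, eval (fun i => t ^ w i * c i) P = eval c P) :
    P ∈ supported K {i | w i = 0} := by
  refine mem_supported_of_eval_indicator fun c => ?_
  rw [← eval_zero_pow_mul_of_forall_ne_zero w h c]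
  congr 2 with i
  by_cases hi : w i = 0 <;> simp [Set.indicator, hi]

end MvPolynomial

namespace Matrix

variable {n R : Type*} [Fintype n] [CommRing R]

theorem mul_apply_of_forall_ne_eq_zero (B : Matrix n n R) {X : Matrix n n R} {i₀ j : n}
    (hX : ∀ i ≠ i₀, X i j = 0) (i : n) : (B * X) i j = B i i₀ * X i₀ j := by
  rw [mul_apply, Finset.sum_eq_single i₀ (fun m _ hm => by rw [hX m hm, mul_zero]) (by simp)]

theorem inv_mul_mul_apply_of_forall_ne_eq_zero [DecidableEq n] {A X : Matrix n n R}
    (hA : IsUnit A.det) {i₀ : n} (hAi₀ : ∀ i ≠ i₀, A i i₀ = 0) (hXi₀ : ∀ i ≠ i₀, X i i₀ = 0) :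
    (A⁻¹ * X * A) i₀ i₀ = X i₀ i₀ := by
  have hinv : A⁻¹ i₀ i₀ * A i₀ i₀ = 1 := by
    simpa [mul_apply_of_forall_ne_eq_zero _ hAi₀] using congr_fun₂ (nonsing_inv_mul A hA) i₀ i₀
  rw [mul_apply_of_forall_ne_eq_zero _ hAi₀, mul_apply_of_forall_ne_eq_zero _ hXi₀]
  linear_combination X i₀ i₀ * hinv

end Matrix

theorem Fintype.card_le_sum_of_pos {ι : Type*} [Fintype ι] {s : ι → ℕ} (hs : ∀ l, 0 < s l) :
    Fintype.card ι ≤ ∑ l, s l := by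
  simpa using Finset.card_nsmul_le_sum Finset.univ s 1 fun l _ => hs l

theorem Fintype.eq_one_of_sum_eq_card {ι : Type*} [Fintype ι] {s : ι → ℕ} (hs : ∀ l, 0 < s l)
    (h : ∑ l, s l = Fintype.card ι) : s = 1 :=
  funext fun l => ((Finset.sum_eq_sum_iff_of_le (f := 1) (g := s) fun l _ => hs l).1
    (by simpa using h.symm) l (Finset.mem_univ l)).symm

open Matrix

section Mmat

variable {k : ℕ}

theorem Mmat_apply_of_lt (a : Fin k → ℂ) {i j : Fin k} (h : j < i) : Mmat k a i j = 0 := by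
  refine Finset.sum_eq_zero fun s hs => absurd ?_ (not_le.2 (Fin.lt_def.1 h))
  simp only [Finset.mem_filter, Finset.Nat.mem_antidiagonalTuple] at hs
  simpa [hs.1] using Fintype.card_le_sum_of_pos hs.2

theorem Mmat_isUpperTriangular (a : Fin k → ℂ) : (Mmat k a).IsUpperTriangular :=
  fun _ _ h => Mmat_apply_of_lt a h

variable [NeZero k]

theorem Mmat_apply_self (a : Fin k → ℂ) (i : Fin k) : Mmat k a i i = a 0 ^ (i.val + 1) := by
  have hcomp : (Finset.Nat.antidiagonalTuple (i.val + 1) (i.val + 1)).filter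
      (fun s => ∀ l, 0 < s l) = {1} := by
    ext s
    simp only [Finset.mem_filter, Finset.Nat.mem_antidiagonalTuple, Finset.mem_singleton]
    refine ⟨fun hs => Fintype.eq_one_of_sum_eq_card hs.2 (by simpa using hs.1), ?_⟩
    rintro rfl
    simp
  have hk : 1 ≤ k := Nat.one_le_iff_ne_zero.2 (NeZero.ne k)
  simp [Mmat, hcomp, hk]

theorem Mmat_single_zero (t : ℂ) :
    Mmat k (Pi.single 0 t) = diagonal fun i => t ^ (i.val + 1) := by
  ext i j
  rcases eq_or_ne i j with rfl | hij
  · simp [Mmat_apply_self]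
  rw [diagonal_apply_ne _ hij]
  refine Finset.sum_eq_zero fun s hs => ?_
  simp only [Finset.mem_filter, Finset.Nat.mem_antidiagonalTuple] at hs
  obtain ⟨l, hl⟩ : ∃ l, s l ≠ 1 := by
    by_contra! h
    have : s = 1 := funext h
    exact hij (Fin.ext (by simpa [this] using hs.1))
  refine Finset.prod_eq_zero (Finset.mem_univ l) ?_
  split_ifs with hb
  · refine Pi.single_eq_of_ne (fun h => hl ?_) (M := fun _ => ℂ) t
    rw [Fin.ext_iff, Fin.val_zero, Fin.val_mk] at h
    omega
  · rfl

end Mmat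

section Gset

variable {k : ℕ} [NeZero k]

theorem coordOf_matOf (c : Fin k → ℂ) : coordOf k (matOf k c) = c := by
  ext j
  simp [coordOf, matOf, Emat, Matrix.sum_apply, Fin.val_inj]

theorem matOf_apply_zero_right (c : Fin k → ℂ) {i : Fin k} (hi : i ≠ 0) : matOf k c i 0 = 0 := by
  rw [Ne, Fin.ext_iff, Fin.val_zero] at hi
  refine (Matrix.sum_apply _ _ _ _).trans (Finset.sum_eq_zero fun s _ => ?_)
  simp only [Matrix.smul_apply, Emat]
  split_ifs with h
  · simp only [Fin.val_zero] at h
    omega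
  · exact smul_zero _

theorem isUpperTriangular_of_mem_Gset {A : Matrix (Fin k) (Fin k) ℂ} (hA : A ∈ Gset k) :
    A.IsUpperTriangular := by
  obtain ⟨a, -, rfl⟩ := hA
  exact Mmat_isUpperTriangular a

theorem isUnit_det_of_mem_Gset {A : Matrix (Fin k) (Fin k) ℂ} (hA : A ∈ Gset k) :
    IsUnit A.det := by
  obtain ⟨a, ha, rfl⟩ := hA
  rw [det_of_isUpperTriangular (Mmat_isUpperTriangular a), isUnit_iff_ne_zero]
  exact Finset.prod_ne_zero_iff.2 fun i _ => by rw [Mmat_apply_self]; exact pow_ne_zero _ ha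

theorem Mmat_single_zero_mem_Gset {t : ℂ} (ht : t ≠ 0) : Mmat k (Pi.single 0 t) ∈ Gset k :=
  ⟨_, by simpa using ht, rfl⟩

theorem coordOf_conj_apply_zero {A : Matrix (Fin k) (Fin k) ℂ} (hA : A ∈ Gset k)
    (c : Fin k → ℂ) : coordOf k (A⁻¹ * matOf k c * A) 0 = c 0 := by
  have hcol : ∀ i ≠ 0, A i 0 = 0 := fun i hi =>
    isUpperTriangular_of_mem_Gset hA (Fin.pos_iff_ne_zero.2 hi)
  rw [coordOf, inv_mul_mul_apply_of_forall_ne_eq_zero (isUnit_det_of_mem_Gset hA) hcol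
    fun i hi => matOf_apply_zero_right c hi]
  exact congrFun (coordOf_matOf c) 0

theorem coordOf_conj_Mmat_single_zero {t : ℂ} (ht : t ≠ 0) (c : Fin k → ℂ) :
    coordOf k ((Mmat k (Pi.single 0 t))⁻¹ * matOf k c * Mmat k (Pi.single 0 t))
      = fun s : Fin k => t ^ (s : ℕ) * c s := by
  ext s
  have hinv : (diagonal fun i : Fin k => t ^ (i.val + 1))⁻¹
      = diagonal fun i => (t ^ (i.val + 1))⁻¹ :=
    inv_eq_left_inv (by simp [diagonal_mul_diagonal, ht])
  rw [Mmat_single_zero, hinv, coordOf, mul_diagonal, diagonal_mul,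
    show matOf k c 0 s = c s from congrFun (coordOf_matOf c) s, Fin.val_zero, zero_add, pow_one,
    pow_succ]
  field_simp

end Gset

/-- `ℂ[g_k]^{G_k}` is a polynomial algebra: there are finitely many invariant
polynomials `f_1, …, f_r`, algebraically independent over `ℂ`, which generate the
invariant algebra of the adjoint action `(A·P)(x) = P(A⁻¹ x A)`. -/
theorem invariant_ring_adjoint_polynomial_algebra (k : ℕ) [NeZero k] :
    ∃ (r : ℕ) (f : Fin r → MvPolynomial (Fin k) ℂ),
      AlgebraicIndependent ℂ f ∧
      (∀ i : Fin r, ∀ A ∈ Gset k, ∀ c : Fin k → ℂ,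
          MvPolynomial.eval (coordOf k (A⁻¹ * matOf k c * A)) (f i)
            = MvPolynomial.eval c (f i)) ∧
      (∀ P : MvPolynomial (Fin k) ℂ,
          (∀ A ∈ Gset k, ∀ c : Fin k → ℂ,
              MvPolynomial.eval (coordOf k (A⁻¹ * matOf k c * A)) P
                = MvPolynomial.eval c P) →
          P ∈ Algebra.adjoin ℂ (Set.range f)) := by
  refine ⟨1, fun _ => MvPolynomial.X 0, ?_,
    fun _ A hA c => by simpa using coordOf_conj_apply_zero hA c, fun P hP => ?_⟩
  · exact (MvPolynomial.algebraicIndependent_X (Fin k) ℂ).comp _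
      (Function.injective_of_subsingleton _)
  have hP₀ : P ∈ MvPolynomial.supported ℂ {s : Fin k | (s : ℕ) = 0} :=
    MvPolynomial.mem_supported_of_forall_eval_pow_mul (fun s : Fin k => (s : ℕ)) fun t ht c => by
      rw [← coordOf_conj_Mmat_single_zero ht]
      exact hP _ (Mmat_single_zero_mem_Gset ht) c
  have hweight_zero : {s : Fin k | (s : ℕ) = 0} = {0} := Set.ext fun _ => Fin.val_eq_zero_iff
  rwa [hweight_zero, MvPolynomial.supported_eq_adjoin_X, Set.image_singleton,
    ← Set.range_const (ι := Fin 1)] at hP₀
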